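/- Consider the convex optimization problem: minimize f = M·μ + M·σ + (2M+1)·θ + ν/W − 2M subject to (1−μ)^+ + (1−σ)^+ + (1−θ)^+ + (Wα_S − ν)^+ ≤ r, μ,σ,θ,ν ≥ 0, μ+θ ≥ 1, σ+θ ≥ 1, where M ≥ 1 is an integer, W > 0, α_S > 0, and W·α_S < 1. If W ≤ 1/(2M+1), then the minimum value equals: 2M+1+α_S − r/W for 0 ≤ r ≤ W·α_S, and (2M+1)(1+W·α_S) − (2M+1)·r for W·α_S ≤ r ≤ 1 + W·α_S. -/

import Mathlib

/-- Feasible objective values of the sum-rate diversity-order LP for the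
`(M,1,1,M)` side-channel assisted full-duplex network with CSIT. -/
def sumDivSet (M : ℕ) (W αS r : ℝ) : Set ℝ :=
  {y : ℝ | ∃ μ σ θ ν : ℝ, 0 ≤ μ ∧ 0 ≤ σ ∧ 0 ≤ θ ∧ 0 ≤ ν ∧
    1 ≤ μ + θ ∧ 1 ≤ σ + θ ∧
    max (1 - μ) 0 + max (1 - σ) 0 + max (1 - θ) 0 + max (W * αS - ν) 0 ≤ r ∧
    y = (M : ℝ) * μ + (M : ℝ) * σ + (2 * (M : ℝ) + 1) * θ + ν / W - 2 * (M : ℝ)}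

/-!
Every unit of the budget `r` spent on the slack of `μ` or `σ` lowers the objective by `M`, on
`θ` by `2M+1`, and on `ν` by `1/W`. Since `1/W ≥ 2M+1 ≥ M`, it is optimal to spend the budget
on `ν` first, down to `0`, and then on `θ`, keeping `μ = σ = 1`. The two matching lower bounds
are the two dual certificates of this linear program, valid for every `r`.
-/

lemma mul_le_div_of_mul_le_one {W k x : ℝ} (hW : 0 < W) (hk : k * W ≤ 1) (hx : 0 ≤ x) :
    k * x ≤ x / W := by
  rw [le_div_iff₀ hW, mul_right_comm]
  exact mul_le_of_le_one_left hx hk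

section SumDivSet

variable {M : ℕ} {W αS r : ℝ}

lemma mem_sumDivSet_of_le_mul (hW : W ≠ 0) (hr : 0 ≤ r) (hrS : r ≤ W * αS) :
    2 * (M : ℝ) + 1 + αS - r / W ∈ sumDivSet M W αS r := by
  refine ⟨1, 1, 1, W * αS - r, zero_le_one, zero_le_one, zero_le_one, sub_nonneg.2 hrS,
    by norm_num, by norm_num, by simpa using hr, ?_⟩
  field_simp
  ring

lemma mem_sumDivSet_of_mul_le (hS : 0 ≤ W * αS) (hrS : W * αS ≤ r) (hr : r ≤ 1 + W * αS) :
    (2 * (M : ℝ) + 1) * (1 + W * αS) - (2 * (M : ℝ) + 1) * r ∈ sumDivSet M W αS r := by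
  refine ⟨1, 1, 1 + W * αS - r, 0, zero_le_one, zero_le_one, by linarith, le_rfl,
    by linarith, by linarith, ?_, by ring⟩
  simp only [sub_self, max_self, sub_zero, max_eq_left hS]
  rw [max_eq_left (by linarith)]
  linarith

/-- `a, b, c` are the slacks `(1 - μ)⁺, (1 - σ)⁺, (1 - θ)⁺` of a feasible point. -/
lemma exists_slack_of_mem_sumDivSet {y : ℝ} (hy : y ∈ sumDivSet M W αS r) :
    ∃ a b c ν : ℝ, 0 ≤ a ∧ 0 ≤ b ∧ 0 ≤ c ∧ 0 ≤ ν ∧ a + b + c + (W * αS - ν) ≤ r ∧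
      2 * (M : ℝ) + 1 + ν / W - (M * a + M * b + (2 * M + 1) * c) ≤ y := by
  obtain ⟨μ, σ, θ, ν, -, -, -, hν, -, -, hr, rfl⟩ := hy
  refine ⟨max (1 - μ) 0, max (1 - σ) 0, max (1 - θ) 0, ν, le_max_right _ _, le_max_right _ _,
    le_max_right _ _, hν, by linarith [le_max_left (W * αS - ν) 0], ?_⟩
  have hμ : (M : ℝ) * (1 - max (1 - μ) 0) ≤ M * μ :=
    mul_le_mul_of_nonneg_left (by linarith [le_max_left (1 - μ) 0]) M.cast_nonneg
  have hσ : (M : ℝ) * (1 - max (1 - σ) 0) ≤ M * σ :=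
    mul_le_mul_of_nonneg_left (by linarith [le_max_left (1 - σ) 0]) M.cast_nonneg
  have hθ : (2 * M + 1 : ℝ) * (1 - max (1 - θ) 0) ≤ (2 * M + 1) * θ :=
    mul_le_mul_of_nonneg_left (by linarith [le_max_left (1 - θ) 0]) (by positivity)
  linarith

lemma weighted_slack_le {a b : ℝ} (ha : 0 ≤ a) (hb : 0 ≤ b) (c : ℝ) :
    M * a + M * b + (2 * M + 1) * c ≤ (2 * M + 1) * (a + b + c) := by
  nlinarith [M.cast_nonneg (α := ℝ)]

lemma le_of_mem_sumDivSet_of_le_mul (hW : 0 < W) (hMW : (2 * (M : ℝ) + 1) * W ≤ 1) {y : ℝ}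
    (hy : y ∈ sumDivSet M W αS r) : 2 * (M : ℝ) + 1 + αS - r / W ≤ y := by
  obtain ⟨a, b, c, ν, ha, hb, hc, -, hr, hy⟩ := exists_slack_of_mem_sumDivSet hy
  have hν : αS - r / W + (a + b + c) / W ≤ ν / W := by
    rw [← mul_div_cancel_left₀ αS hW.ne', ← sub_div, ← add_div]
    exact div_le_div_of_nonneg_right (by linarith) hW.le
  linarith [weighted_slack_le (M := M) ha hb c,
    mul_le_div_of_mul_le_one hW hMW (by positivity : 0 ≤ a + b + c)]

lemma le_of_mem_sumDivSet_of_mul_le (hW : 0 < W) (hMW : (2 * (M : ℝ) + 1) * W ≤ 1) {y : ℝ}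
    (hy : y ∈ sumDivSet M W αS r) :
    (2 * (M : ℝ) + 1) * (1 + W * αS) - (2 * (M : ℝ) + 1) * r ≤ y := by
  obtain ⟨a, b, c, ν, ha, hb, -, hν, hr, hy⟩ := exists_slack_of_mem_sumDivSet hy
  have hνr : (2 * M + 1 : ℝ) * (W * αS - r + (a + b + c)) ≤ (2 * M + 1) * ν :=
    mul_le_mul_of_nonneg_left (by linarith) (by positivity)
  linarith [weighted_slack_le (M := M) ha hb c, mul_le_div_of_mul_le_one hW hMW hν]

end SumDivSet

theorem sum_diversity_lp_small_W_general (M : ℕ) (W αS : ℝ)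
    (hW : 0 < W) (hS : 0 < αS)
    (hWle : W ≤ 1 / (2 * (M : ℝ) + 1)) :
    (∀ r : ℝ, 0 ≤ r → r ≤ W * αS →
      IsLeast (sumDivSet M W αS r) (2 * (M : ℝ) + 1 + αS - r / W)) ∧
    (∀ r : ℝ, W * αS ≤ r → r ≤ 1 + W * αS →
      IsLeast (sumDivSet M W αS r)
        ((2 * (M : ℝ) + 1) * (1 + W * αS) - (2 * (M : ℝ) + 1) * r)) := by
  have hMW : (2 * (M : ℝ) + 1) * W ≤ 1 := by
    rwa [le_div_iff₀' (by positivity)] at hWle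
  refine ⟨fun r hr hrS => ⟨mem_sumDivSet_of_le_mul hW.ne' hr hrS,
      fun _ => le_of_mem_sumDivSet_of_le_mul hW hMW⟩,
    fun r hrS hr => ⟨mem_sumDivSet_of_mul_le (by positivity) hrS hr,
      fun _ => le_of_mem_sumDivSet_of_mul_le hW hMW⟩⟩

/-- When `W ≤ 1/(2M+1)` and `W·αS < 1`, the minimum of the sum diversity-order LP
equals `2M+1+αS − r/W` for `0 ≤ r ≤ W·αS`, and
`(2M+1)(1+W·αS) − (2M+1)·r` for `W·αS ≤ r ≤ 1 + W·αS`. -/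
theorem sum_diversity_lp_small_W (M : ℕ) (hM : 1 ≤ M) (W αS : ℝ)
    (hW : 0 < W) (hS : 0 < αS) (hWS : W * αS < 1)
    (hWle : W ≤ 1 / (2 * (M : ℝ) + 1)) :
    (∀ r : ℝ, 0 ≤ r → r ≤ W * αS →
      IsLeast (sumDivSet M W αS r) (2 * (M : ℝ) + 1 + αS - r / W)) ∧
    (∀ r : ℝ, W * αS ≤ r → r ≤ 1 + W * αS →
      IsLeast (sumDivSet M W αS r)
        ((2 * (M : ℝ) + 1) * (1 + W * αS) - (2 * (M : ℝ) + 1) * r)) :=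
  sum_diversity_lp_small_W_general M W αS hW hS hWle
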